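/- Let m ≥ 1 and let G be a graph on n vertices that has no matching of size m and is maximal with this property (i.e. adding any non-edge of G creates a matching of size m). Then G is a complete blow-up of a star: there is a partition of V(G) into sets A, B₁, …, B_r (some possibly empty) such that two distinct vertices u, v are adjacent in G if and only if u ∈ A, or v ∈ A, or u and v lie in the same set B_i. -/

import Mathlib

open SimpleGraph

variable {V : Type*} {k : ℕ}

/-- The subgraph of `G` spanned by the edges of colour `ℓ`. -/
def colourGraph (G : SimpleGraph V) (χ : Sym2 V → Fin k) (ℓ : Fin k) : SimpleGraph V where
  Adj u v := G.Adj u v ∧ χ s(u, v) = ℓ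
  symm := by
    constructor
    intro u v h
    exact ⟨h.1.symm, by rw [Sym2.eq_swap]; exact h.2⟩
  loopless := by
    constructor
    intro u h
    exact G.loopless.irrefl u h.1

/-- `M` is a matching in `H`: its pairs are edges of `H` and are pairwise vertex-disjoint. -/
def IsMatchingSet (H : SimpleGraph V) (M : Finset (V × V)) : Prop :=
  (∀ e ∈ M, H.Adj e.1 e.2) ∧
  (∀ e ∈ M, ∀ e' ∈ M, e ≠ e' →
    e.1 ≠ e'.1 ∧ e.1 ≠ e'.2 ∧ e.2 ≠ e'.1 ∧ e.2 ≠ e'.2)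

/-- `M` is a connected matching in `H`: a matching contained in one component of `H`. -/
def IsConnMatching (H : SimpleGraph V) (M : Finset (V × V)) : Prop :=
  IsMatchingSet H M ∧ ∀ e ∈ M, ∀ e' ∈ M, H.Reachable e.1 e'.1

/-- A piece of a 2-matching: a list of vertices forming either an edge or an odd cycle of `H`. -/
def IsTwoMatchPiece (H : SimpleGraph V) (l : List V) : Prop :=
  2 ≤ l.length ∧ (l.length = 2 ∨ Odd l.length) ∧ l.Nodup ∧ l.Chain' H.Adj ∧
    ∀ (h : l ≠ []), H.Adj (l.getLast h) (l.head h)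

/-- A 2-matching in `H`: a collection of pairwise vertex-disjoint edges and odd cycles. -/
def IsTwoMatching (H : SimpleGraph V) (P : List (List V)) : Prop :=
  (∀ l ∈ P, IsTwoMatchPiece H l) ∧
    P.Pairwise (fun l₁ l₂ => ∀ v ∈ l₁, v ∉ l₂)

/-- The order of a 2-matching: the number of vertices it covers. -/
def twoMatchOrder (P : List (List V)) : ℕ := (P.map List.length).sum

/-- A connected 2-matching: a 2-matching contained in one component of `H`. -/
def IsConnTwoMatching (H : SimpleGraph V) (P : List (List V)) : Prop :=
  IsTwoMatching H P ∧ ∀ l ∈ P, ∀ v ∈ l, ∀ l' ∈ P, ∀ v' ∈ l', H.Reachable v v'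

/-- The component of `H` containing the matching `M` is non-bipartite (contains an odd cycle). -/
def MatchingInNonBipComponent (H : SimpleGraph V) (M : Finset (V × V)) : Prop :=
  ∃ (w : V) (p : H.Walk w w), p.IsCycle ∧ Odd p.length ∧ ∀ e ∈ M, H.Reachable e.1 w

/-- The component of `H` containing the 2-matching `P` is non-bipartite. -/
def TwoMatchingInNonBipComponent (H : SimpleGraph V) (P : List (List V)) : Prop :=
  ∃ (w : V) (p : H.Walk w w), p.IsCycle ∧ Odd p.length ∧ ∀ l ∈ P, ∀ v ∈ l, H.Reachable v w

/-- `H` contains a cycle of length `t`. -/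
def HasCycleLen (H : SimpleGraph V) (t : ℕ) : Prop :=
  ∃ (w : V) (p : H.Walk w w), p.IsCycle ∧ p.length = t

/-- `H` contains a path on `n` vertices. -/
def HasPathOn (H : SimpleGraph V) (n : ℕ) : Prop :=
  ∃ (u v : V) (p : H.Walk u v), p.IsPath ∧ p.length + 1 = n

/-- The blow-up `F(m₁, …, m_s)` of a graph `F` on `[s]`, possibly with loops, where vertex `i`
is replaced by `m i` vertices. -/
def blowup {s : ℕ} (F : Fin s → Fin s → Prop) (hF : Symmetric F) (m : Fin s → ℕ) :
    SimpleGraph ((i : Fin s) × Fin (m i)) where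
  Adj x y := x ≠ y ∧ F x.1 y.1
  symm := by
    constructor
    intro x y h
    exact ⟨h.1.symm, hF h.2⟩
  loopless := by
    constructor
    intro x h
    exact h.1 rfl

/-- The largest even natural number which is at most `x`. -/
noncomputable def evenFloor (x : ℝ) : ℕ := 2 * ⌊x / 2⌋₊

/-- The largest odd natural number which is at most `x` (for `x ≥ 1`). -/
noncomputable def oddFloor (x : ℝ) : ℕ := 2 * ⌊(x - 1) / 2⌋₊ + 1


/-!
Suppose `xy` and `yz` are edges but `xz` is not, and `y` is not universal, say `yw` is a
non-edge. Adding `xz` creates an `m`-matching, so there is a matching `M` of size `m - 1` missing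
`x` and `z`; likewise adding `yw` gives one, `N`, missing `y`. Flipping `M` along the `M`–`N`
alternating path from `y` either augments `N`, which is impossible, or gives a matching of size
`m - 1` missing `y` and one of `x`, `z`, to which `xy` or `yz` can be added. So the neighbourhood
of every non-universal vertex is a clique; hence adjacency is an equivalence relation on the
non-universal vertices, whose classes are the cliques `Bᵢ`, and the universal vertices form `A`.
-/

def matchedVerts (M : Finset (V × V)) : Set V := {v | ∃ e ∈ M, v = e.1 ∨ v = e.2}

section Matchings

variable {H : SimpleGraph V} {M N : Finset (V × V)} {v w : V}

theorem matchedVerts_mono (h : M ⊆ N) : matchedVerts M ⊆ matchedVerts N :=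
  fun _ ⟨e, he, hv⟩ => ⟨e, h he, hv⟩

theorem matchedVerts_insert [DecidableEq V] :
    matchedVerts (insert (v, w) M) = insert v (insert w (matchedVerts M)) := by
  ext u
  simp [matchedVerts, or_assoc]

theorem matchedVerts_insert_subset [DecidableEq V] {S : Set V} (hv : v ∈ S) (hw : w ∈ S)
    (hM : matchedVerts M ⊆ S) : matchedVerts (insert (v, w) M) ⊆ S := by
  rw [matchedVerts_insert]
  exact Set.insert_subset hv (Set.insert_subset hw hM)

theorem IsMatchingSet.mono (hM : IsMatchingSet H M) (h : N ⊆ M) : IsMatchingSet H N :=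
  ⟨fun e he => hM.1 e (h he), fun e he e' he' hne => hM.2 e (h he) e' (h he') hne⟩

theorem IsMatchingSet.insert_of_notMem [DecidableEq V] (hM : IsMatchingSet H M) (hvw : H.Adj v w)
    (hv : v ∉ matchedVerts M) (hw : w ∉ matchedVerts M) :
    IsMatchingSet H (insert (v, w) M) ∧ (insert (v, w) M).card = M.card + 1 := by
  have hfresh : ∀ e ∈ M, v ≠ e.1 ∧ v ≠ e.2 ∧ w ≠ e.1 ∧ w ≠ e.2 := fun e he =>
    ⟨fun h => hv ⟨e, he, .inl h⟩, fun h => hv ⟨e, he, .inr h⟩,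
      fun h => hw ⟨e, he, .inl h⟩, fun h => hw ⟨e, he, .inr h⟩⟩
  refine ⟨⟨?_, ?_⟩, Finset.card_insert_of_notMem fun h => hv ⟨_, h, .inl rfl⟩⟩
  · simp only [Finset.mem_insert, forall_eq_or_imp]
    exact ⟨hvw, hM.1⟩
  · simp only [Finset.mem_insert, forall_eq_or_imp]
    refine ⟨⟨fun h => absurd rfl h, fun e he _ => hfresh e he⟩,
      fun e he => ⟨fun _ => ?_, hM.2 e he⟩⟩
    obtain ⟨h1, h2, h3, h4⟩ := hfresh e he
    exact ⟨h1.symm, h3.symm, h2.symm, h4.symm⟩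

theorem IsMatchingSet.notMem_matchedVerts_erase [DecidableEq V] (hM : IsMatchingSet H M)
    {e : V × V} (he : e ∈ M) (hv : v = e.1 ∨ v = e.2) : v ∉ matchedVerts (M.erase e) := by
  rintro ⟨e', he', hv'⟩
  obtain ⟨h1, h2, h3, h4⟩ :=
    hM.2 e' (Finset.mem_of_mem_erase he') e he (Finset.ne_of_mem_erase he')
  rcases hv with rfl | rfl <;> rcases hv' with h | h <;> simp_all

theorem IsMatchingSet.exists_erase [DecidableEq V] (hM : IsMatchingSet H M)
    (hv : v ∈ matchedVerts M) :
    ∃ w M', H.Adj v w ∧ w ∈ matchedVerts M ∧ M' ⊂ M ∧ IsMatchingSet H M' ∧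
      M'.card + 1 = M.card ∧ v ∉ matchedVerts M' ∧ w ∉ matchedVerts M' := by
  obtain ⟨e, he, hve⟩ := hv
  obtain ⟨w, hadj, hwe⟩ : ∃ w, H.Adj v w ∧ (w = e.1 ∨ w = e.2) := by
    rcases hve with rfl | rfl
    exacts [⟨e.2, hM.1 e he, .inr rfl⟩, ⟨e.1, (hM.1 e he).symm, .inl rfl⟩]
  exact ⟨w, M.erase e, hadj, ⟨e, he, hwe⟩, Finset.erase_ssubset he,
    hM.mono (Finset.erase_subset e M), Finset.card_erase_add_one he,
    hM.notMem_matchedVerts_erase he hve, hM.notMem_matchedVerts_erase he hwe⟩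

/-- Walk along the `M`–`N` alternating path from `y`: if it ends with an `M`-edge, flipping it
augments `N`; otherwise flipping it in `M` frees `y` and newly covers only its last vertex `t`. -/
theorem IsMatchingSet.augment_or_exchange (hM : IsMatchingSet H M) (hN : IsMatchingSet H N)
    {y : V} (hy : y ∉ matchedVerts N) :
    (∃ W, IsMatchingSet H W ∧ W.card = N.card + 1 ∧
      matchedVerts W ⊆ matchedVerts M ∪ matchedVerts N) ∨
    (∃ W, IsMatchingSet H W ∧ W.card = M.card ∧
      matchedVerts W ⊆ matchedVerts M ∪ matchedVerts N ∧
      y ∉ matchedVerts W ∧ ∃ t, matchedVerts W ⊆ insert t (matchedVerts M)) := by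
  classical
  induction M using Finset.strongInduction generalizing N y with
  | H M ih =>
  by_cases hyM : y ∈ matchedVerts M
  swap
  · exact .inr ⟨M, hM, rfl, Set.subset_union_left, hyM, y, Set.subset_insert _ _⟩
  obtain ⟨a, M', hya, haM, hM'M, hM', hM'card, hyM', haM'⟩ := hM.exists_erase hyM
  have hM'sub := matchedVerts_mono hM'M.subset
  by_cases haN : a ∈ matchedVerts N
  swap
  · obtain ⟨hW, hWcard⟩ := hN.insert_of_notMem hya hy haN
    exact .inl ⟨_, hW, hWcard, matchedVerts_insert_subset (.inl hyM) (.inl haM)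
      Set.subset_union_right⟩
  obtain ⟨b, N', hab, hbN, hN'N, hN', hN'card, haN', hbN'⟩ := hN.exists_erase haN
  have hN'sub := matchedVerts_mono hN'N.subset
  have hyb : y ≠ b := fun h => hy (h ▸ hbN)
  have hyN' : y ∉ matchedVerts N' := fun h => hy (hN'sub h)
  by_cases hbM : b ∈ matchedVerts M
  swap
  · obtain ⟨hW, hWcard⟩ := hM'.insert_of_notMem hab haM' fun h => hbM (hM'sub h)
    refine .inr ⟨_, hW, hWcard.trans hM'card,
      matchedVerts_insert_subset (.inl haM) (.inr hbN) (hM'sub.trans Set.subset_union_left), ?_,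
      b, matchedVerts_insert_subset (.inr haM) (.inl rfl) (hM'sub.trans (Set.subset_insert _ _))⟩
    simp [matchedVerts_insert, hya.ne, hyb, hyM']
  have hunion := Set.union_subset_union hM'sub hN'sub
  rcases ih M' hM'M hM' hN' hbN' with
    ⟨W, hW, hWcard, hWverts⟩ | ⟨W, hW, hWcard, hWverts, hbW, t, ht⟩
  all_goals
    have hyW : y ∉ matchedVerts W := fun h => (hWverts h).elim hyM' hyN'
    have haW : a ∉ matchedVerts W := fun h => (hWverts h).elim haM' haN'
  · obtain ⟨hW', hW'card⟩ := hW.insert_of_notMem hya hyW haW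
    exact .inl ⟨_, hW', by omega,
      matchedVerts_insert_subset (.inl hyM) (.inl haM) (hWverts.trans hunion)⟩
  · obtain ⟨hW', hW'card⟩ := hW.insert_of_notMem hab haW hbW
    refine .inr ⟨_, hW', by omega,
      matchedVerts_insert_subset (.inl haM) (.inl hbM) (hWverts.trans hunion), ?_,
      t, matchedVerts_insert_subset (.inr haM) (.inr hbM)
        (ht.trans (Set.insert_subset_insert hM'sub))⟩
    simp [matchedVerts_insert, hya.ne, hyb, hyW]

theorem IsMatchingSet.of_sup_edge {G : SimpleGraph V} {a b : V}
    (hM : IsMatchingSet (G ⊔ fromEdgeSet {s(a, b)}) M) :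
    IsMatchingSet G M ∨ ∃ M', IsMatchingSet G M' ∧ M'.card + 1 = M.card ∧
      a ∉ matchedVerts M' ∧ b ∉ matchedVerts M' := by
  classical
  have hnew : ∀ e ∈ M, ¬ G.Adj e.1 e.2 → e.1 = a ∧ e.2 = b ∨ e.1 = b ∧ e.2 = a := by
    intro e he hG
    have := hM.1 e he
    simp only [sup_adj, fromEdgeSet_adj, Set.mem_singleton_iff, Sym2.eq_iff, hG, false_or] at this
    exact this.1
  obtain ⟨e, he, heG⟩ | hG := em (∃ e ∈ M, ¬ G.Adj e.1 e.2)
  swap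
  · exact .inl ⟨fun e he => by_contra fun h => hG ⟨e, he, h⟩, hM.2⟩
  have hab : ∀ u, u = a ∨ u = b → u ∉ matchedVerts (M.erase e) := fun u hu =>
    hM.notMem_matchedVerts_erase he <| by
      rcases hnew e he heG with ⟨h1, h2⟩ | ⟨h1, h2⟩ <;> grind
  refine .inr ⟨M.erase e, ⟨fun g hg => ?_, (hM.mono (Finset.erase_subset e M)).2⟩,
    Finset.card_erase_add_one he, hab a (.inl rfl), hab b (.inr rfl)⟩
  by_contra hgG
  have hg1 : g.1 = a ∨ g.1 = b :=
    (hnew g (Finset.mem_of_mem_erase hg) hgG).imp And.left And.left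
  exact hab g.1 hg1 ⟨g, hg, .inl rfl⟩

end Matchings

section Maximal

variable {G : SimpleGraph V} {m : ℕ}

theorem exists_matching_avoiding (hno : ∀ M : Finset (V × V), IsMatchingSet G M → M.card ≠ m)
    {a b : V} (h : ∃ M, IsMatchingSet (G ⊔ fromEdgeSet {s(a, b)}) M ∧ M.card = m) :
    ∃ M, IsMatchingSet G M ∧ M.card + 1 = m ∧
      a ∉ matchedVerts M ∧ b ∉ matchedVerts M := by
  obtain ⟨M, hM, rfl⟩ := h
  exact hM.of_sup_edge.resolve_left fun hG => hno M hG rfl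

theorem isClique_neighborSet_of_notMem_universalVerts
    (hno : ∀ M : Finset (V × V), IsMatchingSet G M → M.card ≠ m)
    (hmax : ∀ u v : V, u ≠ v → ¬ G.Adj u v →
      ∃ M : Finset (V × V), IsMatchingSet (G ⊔ fromEdgeSet {s(u, v)}) M ∧ M.card = m)
    {y : V} (hy : y ∉ G.universalVerts) : G.IsClique (G.neighborSet y) := by
  classical
  intro x hxy z hyz hxz
  by_contra hxz'
  obtain ⟨w, hwy, hyw⟩ : ∃ w, y ≠ w ∧ ¬ G.Adj y w := by
    simpa [universalVerts, IsUniversal] using hy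
  obtain ⟨M, hM, hMcard, hxM, hzM⟩ := exists_matching_avoiding hno (hmax x z hxz hxz')
  obtain ⟨N, hN, hNcard, hyN, -⟩ := exists_matching_avoiding hno (hmax y w hwy hyw)
  rcases hM.augment_or_exchange hN hyN with
    ⟨W, hW, hWcard, -⟩ | ⟨W, hW, hWcard, -, hyW, t, ht⟩
  · exact hno W hW (by omega)
  have hxzW : x ∉ matchedVerts W ∨ z ∉ matchedVerts W := by
    by_cases hxt : x = t
    · exact .inr fun h => ((ht h).resolve_left (hxt ▸ hxz).symm) |> hzM
    · exact .inl fun h => ((ht h).resolve_left hxt) |> hxM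
  rcases hxzW with hxW | hzW
  · obtain ⟨hW', hW'card⟩ := hW.insert_of_notMem hxy.symm hxW hyW
    exact hno _ hW' (by omega)
  · obtain ⟨hW', hW'card⟩ := hW.insert_of_notMem hyz hyW hzW
    exact hno _ hW' (by omega)

end Maximal

theorem Setoid.exists_fin_partition {α : Type*} [Finite α] (s : Setoid α) :
    ∃ (r : ℕ) (B : Fin r → Set α), (⋃ i, B i) = Set.univ ∧
      (∀ i j, i ≠ j → Disjoint (B i) (B j)) ∧
      ∀ u v, s u v ↔ ∃ i, u ∈ B i ∧ v ∈ B i := by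
  obtain ⟨r, ⟨e⟩⟩ := Finite.exists_equiv_fin (Quotient s)
  refine ⟨r, fun i => {u | e ⟦u⟧ = i}, ?_, ?_, fun u v => ?_⟩
  · exact Set.eq_univ_of_forall fun u => Set.mem_iUnion.2 ⟨e ⟦u⟧, rfl⟩
  · intro i j hij
    exact Set.disjoint_left.2 fun u hi hj => hij (hi.symm.trans hj)
  · rw [← Quotient.eq, ← e.apply_eq_iff_eq]
    exact ⟨fun h => ⟨_, rfl, h.symm⟩, fun ⟨i, hu, hv⟩ => hu.trans hv.symm⟩

def IsCompleteStarBlowup (G : SimpleGraph V) (A : Set V) {r : ℕ} (B : Fin r → Set V) : Prop :=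
  (A ∪ ⋃ i, B i) = Set.univ ∧ (∀ i, Disjoint A (B i)) ∧
    (∀ i j, i ≠ j → Disjoint (B i) (B j)) ∧
    ∀ u v : V, u ≠ v → (G.Adj u v ↔ u ∈ A ∨ v ∈ A ∨ ∃ i, u ∈ B i ∧ v ∈ B i)

def nonUniversalAdjSetoid (G : SimpleGraph V)
    (hG : ∀ y ∉ G.universalVerts, G.IsClique (G.neighborSet y)) : Setoid V where
  r u v := u = v ∨ (G.Adj u v ∧ u ∉ G.universalVerts ∧ v ∉ G.universalVerts)
  iseqv := by
    refine ⟨fun _ => .inl rfl, ?_, ?_⟩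
    · rintro u v (rfl | ⟨huv, hu, hv⟩)
      exacts [.inl rfl, .inr ⟨huv.symm, hv, hu⟩]
    · rintro u v w (rfl | ⟨huv, hu, hv⟩) (rfl | ⟨hvw, hv', hw⟩)
      exacts [.inl rfl, .inr ⟨hvw, hv', hw⟩, .inr ⟨huv, hu, hv⟩,
        (eq_or_ne u w).imp id fun huw => ⟨hG v hv huv.symm hvw huw, hu, hw⟩]

theorem exists_isCompleteStarBlowup [Finite V] (G : SimpleGraph V)
    (hG : ∀ y ∉ G.universalVerts, G.IsClique (G.neighborSet y)) :
    ∃ (A : Set V) (r : ℕ) (B : Fin r → Set V), IsCompleteStarBlowup G A B := by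
  obtain ⟨r, B, hcover, hdisj, hrel⟩ := (nonUniversalAdjSetoid G hG).exists_fin_partition
  refine ⟨G.universalVerts, r, fun i => B i \ G.universalVerts, ?_, fun i => ?_,
    fun i j hij => ?_, fun u v huv => ?_⟩
  · rw [← Set.iUnion_sdiff, Set.union_sdiff_self, hcover, Set.union_univ]
  · exact Set.disjoint_sdiff_right
  · exact (hdisj i j hij).mono Set.sdiff_subset Set.sdiff_subset
  · by_cases hu : u ∈ G.universalVerts
    · simpa [hu] using hu huv
    by_cases hv : v ∈ G.universalVerts
    · simpa [hv] using (hv huv.symm).symm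
    have hadj : G.Adj u v ↔ ∃ i, u ∈ B i ∧ v ∈ B i := by
      rw [← hrel]
      exact ⟨fun h => .inr ⟨h, hu, hv⟩, fun h => (h.resolve_left huv).1⟩
    simp [hu, hv, hadj]

theorem stmt_9_general {V : Type*} [Fintype V] (m : ℕ) (G : SimpleGraph V)
    (hno : ∀ M : Finset (V × V), IsMatchingSet G M → M.card ≠ m)
    (hmax : ∀ u v : V, u ≠ v → ¬ G.Adj u v →
      ∃ M : Finset (V × V),
        IsMatchingSet (G ⊔ SimpleGraph.fromEdgeSet {s(u, v)}) M ∧ M.card = m) :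
    ∃ (A : Set V) (r : ℕ) (B : Fin r → Set V),
      (A ∪ ⋃ i, B i) = Set.univ ∧
      (∀ i, Disjoint A (B i)) ∧
      (∀ i j, i ≠ j → Disjoint (B i) (B j)) ∧
      ∀ u v : V, u ≠ v →
        (G.Adj u v ↔ u ∈ A ∨ v ∈ A ∨ ∃ i, u ∈ B i ∧ v ∈ B i) :=
  exists_isCompleteStarBlowup G fun _ hy =>
    isClique_neighborSet_of_notMem_universalVerts hno hmax hy

/-- Lemma `lem:ge`: a graph maximal without a matching of size `m` is a
complete blow-up of a star, with centre `A` and leaves `B 0, …, B (r-1)`. -/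
theorem stmt_9 {V : Type*} [Fintype V] (m : ℕ) (hm : 1 ≤ m) (G : SimpleGraph V)
    (hno : ∀ M : Finset (V × V), IsMatchingSet G M → M.card ≠ m)
    (hmax : ∀ u v : V, u ≠ v → ¬ G.Adj u v →
      ∃ M : Finset (V × V),
        IsMatchingSet (G ⊔ SimpleGraph.fromEdgeSet {s(u, v)}) M ∧ M.card = m) :
    ∃ (A : Set V) (r : ℕ) (B : Fin r → Set V),
      (A ∪ ⋃ i, B i) = Set.univ ∧
      (∀ i, Disjoint A (B i)) ∧
      (∀ i j, i ≠ j → Disjoint (B i) (B j)) ∧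
      ∀ u v : V, u ≠ v →
        (G.Adj u v ↔ u ∈ A ∨ v ∈ A ∨ ∃ i, u ∈ B i ∧ v ∈ B i) :=
  stmt_9_general m G hno hmax
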